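/- Let U ⊆ X be open convex and f ∈ C^{1u}(U,Y). If f′ takes U-bounded weakly p-compact subsets of U into relatively compact subsets of K(X,Y), then f is p-convergent: for every U-bounded sequence (x_n) in U weakly p-convergent to x ∈ U, f(x_n) → f(x) in norm. -/

import Mathlib

open Filter Topology Metric Set
open scoped ENNReal NNReal

section Defs

variable {X Y : Type*} [NormedAddCommGroup X] [NormedSpace ℝ X]
  [NormedAddCommGroup Y] [NormedSpace ℝ Y]

/-- A sequence `(x n)` in `X` is weakly `p`-summable if `(f (x n))ₙ ∈ ℓ_p` for every
continuous linear functional `f` (for `p = ∞`, this means `(f (x n))ₙ ∈ c₀`). -/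
def WeaklyLpSummable (p : ℝ≥0∞) (x : ℕ → X) : Prop :=
  ∀ f : X →L[ℝ] ℝ,
    if p = ⊤ then Filter.Tendsto (fun n => f (x n)) Filter.atTop (nhds 0)
    else Memℓp (fun n => f (x n)) p

/-- A sequence is weakly `p`-Cauchy if all difference sequences along pairs of strictly
monotone index sequences are weakly `p`-summable. -/
def WeaklyLpCauchy (p : ℝ≥0∞) (x : ℕ → X) : Prop :=
  ∀ m k : ℕ → ℕ, StrictMono m → StrictMono k →
    WeaklyLpSummable p (fun i => x (m i) - x (k i))

/-- `(x n)` is weakly `p`-convergent to `x₀` if `(x n - x₀)` is weakly `p`-summable. -/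
def WeaklyLpConvergentTo (p : ℝ≥0∞) (x : ℕ → X) (x₀ : X) : Prop :=
  WeaklyLpSummable p (fun n => x n - x₀)

/-- A set `K ⊆ L(X,Y)` is uniformly `p`-convergent if `lim_n sup_{T ∈ K} ‖T (x n)‖ = 0`
for every weakly `p`-summable sequence `(x n)`. -/
def UniformlyPConvergent (p : ℝ≥0∞) (K : Set (X →L[ℝ] Y)) : Prop :=
  ∀ x : ℕ → X, WeaklyLpSummable p x →
    ∀ ε > 0, ∃ N : ℕ, ∀ n ≥ N, ∀ T ∈ K, ‖T (x n)‖ < ε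

/-- `B` is `U`-bounded: contained in `U`, bounded, and at positive distance from `∂U`. -/
def UBounded (U B : Set X) : Prop :=
  B ⊆ U ∧ Bornology.IsBounded B ∧ ∃ r > 0, ∀ b ∈ B, Metric.ball b r ⊆ U

/-- A sequence is `U`-bounded if its range is a `U`-bounded set. -/
def UBoundedSeq (U : Set X) (x : ℕ → X) : Prop :=
  UBounded U (Set.range x)

/-- `f ∈ C^{1u}(U,Y)`: `f` is differentiable on `U` with derivative `f'` which is
uniformly continuous on `U`-bounded subsets of `U`. -/
def C1u (U : Set X) (f : X → Y) (f' : X → X →L[ℝ] Y) : Prop :=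
  (∀ x ∈ U, HasFDerivAt f (f' x) x) ∧
  ∀ B : Set X, UBounded U B → UniformContinuousOn f' B

/-- `T` is a `p`-convergent operator: it maps weakly `p`-summable sequences to norm-null
sequences. -/
def PConvergentOp (p : ℝ≥0∞) (T : X →L[ℝ] Y) : Prop :=
  ∀ x : ℕ → X, WeaklyLpSummable p x →
    Filter.Tendsto (fun n => ‖T (x n)‖) Filter.atTop (nhds 0)

/-- `f` is weakly `p`-sequentially continuous on `U`: it maps `U`-bounded weakly
`p`-Cauchy sequences to norm convergent sequences. -/
def WeaklyPSeqCont (p : ℝ≥0∞) (U : Set X) (f : X → Y) : Prop :=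
  ∀ x : ℕ → X, UBoundedSeq U x → WeaklyLpCauchy p x →
    ∃ l : Y, Filter.Tendsto (fun n => f (x n)) Filter.atTop (nhds l)

/-- `K` is weakly `p`-precompact: every sequence in `K` has a weakly `p`-Cauchy
subsequence. -/
def WeaklyPPrecompact (p : ℝ≥0∞) (K : Set X) : Prop :=
  ∀ x : ℕ → X, (∀ n, x n ∈ K) →
    ∃ m : ℕ → ℕ, StrictMono m ∧ WeaklyLpCauchy p (fun i => x (m i))

end Defs

/-! For each `n` the mean value inequality, obtained from Hahn–Banach and the scalar mean value
theorem, gives `tₙ ∈ [0,1]` with `‖f xₙ - f x₀‖ ≤ ‖f' cₙ (xₙ - x₀)‖`, where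
`cₙ = x₀ + tₙ • (xₙ - x₀)`. The points `cₙ` lie in the convex hull of `{xₙ} ∪ {x₀}`, hence form a
`U`-bounded sequence, and `cₙ - x₀ = tₙ • (xₙ - x₀)` is weakly `p`-summable, so the hypothesis
makes `{f' cₙ}` a totally bounded set of compact operators. A compact operator maps the bounded
weakly null sequence `xₙ - x₀` to a norm null one, and total boundedness makes this uniform over
the set. -/

theorem Convex.setOf_ball_subset {X : Type*} [NormedAddCommGroup X] [NormedSpace ℝ X]
    {U : Set X} (hU : Convex ℝ U) (r : ℝ) : Convex ℝ {z | ball z r ⊆ U} := by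
  intro z₁ hz₁ z₂ hz₂ a b ha hb hab y hy
  obtain ⟨w, rfl⟩ : ∃ w, y = a • z₁ + b • z₂ + w := ⟨_, (add_sub_cancel _ y).symm⟩
  have hw : ‖w‖ < r := by rwa [mem_ball_iff_norm, add_sub_cancel_left] at hy
  have hsplit : a • z₁ + b • z₂ + w = a • (z₁ + w) + b • (z₂ + w) := by
    calc a • z₁ + b • z₂ + w = a • z₁ + b • z₂ + (a + b) • w := by rw [hab, one_smul]
      _ = a • (z₁ + w) + b • (z₂ + w) := by module
  rw [hsplit]
  exact hU (hz₁ (by rwa [mem_ball_iff_norm, add_sub_cancel_left]))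
    (hz₂ (by rwa [mem_ball_iff_norm, add_sub_cancel_left])) ha hb hab

namespace UBounded

variable {X : Type*} [NormedAddCommGroup X] {U A B : Set X}

theorem mono (hB : UBounded U B) (hAB : A ⊆ B) : UBounded U A :=
  ⟨hAB.trans hB.1, hB.2.1.subset hAB,
    hB.2.2.imp fun _ ⟨hr, hball⟩ => ⟨hr, fun b hb => hball b (hAB hb)⟩⟩

theorem union_singleton (hB : UBounded U B) (hU : IsOpen U) {x : X} (hx : x ∈ U) :
    UBounded U (B ∪ {x}) := by
  obtain ⟨hBU, hBb, r, hr, hball⟩ := hB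
  obtain ⟨ρ, hρ, hxball⟩ := Metric.isOpen_iff.1 hU x hx
  refine ⟨union_subset hBU (singleton_subset_iff.2 hx), hBb.union Bornology.isBounded_singleton,
    min r ρ, lt_min hr hρ, ?_⟩
  rintro b (hb | rfl)
  · exact (ball_subset_ball (min_le_left _ _)).trans (hball b hb)
  · exact (ball_subset_ball (min_le_right _ _)).trans hxball

theorem convexHull [NormedSpace ℝ X] (hB : UBounded U B) (hU : Convex ℝ U) :
    UBounded U (convexHull ℝ B) := by
  obtain ⟨hBU, hBb, r, hr, hball⟩ := hB
  exact ⟨convexHull_min hBU hU, isBounded_convexHull.2 hBb, r, hr,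
    convexHull_min hball (hU.setOf_ball_subset r)⟩

end UBounded

section

variable {X Y : Type*} [NormedAddCommGroup X] [NormedSpace ℝ X]
  [NormedAddCommGroup Y] [NormedSpace ℝ Y]

theorem Memℓp.tendsto_cofinite_zero {α E : Type*} [NormedAddCommGroup E] {p : ℝ≥0∞}
    {u : α → E} (hu : Memℓp u p) (hp : p ≠ ⊤) : Tendsto u cofinite (𝓝 0) := by
  obtain rfl | rfl | hp₀ := p.trichotomy
  · exact tendsto_const_nhds.congr' <|
      hu.finite_dsupport.eventually_cofinite_notMem.mono fun n hn => (not_not.1 hn).symm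
  · exact (hp rfl).elim
  · have hpow := (hu.summable hp₀).tendsto_cofinite_zero.rpow_const
      (p := p.toReal⁻¹) (Or.inr (inv_nonneg.2 hp₀.le))
    rw [Real.zero_rpow (inv_ne_zero hp₀.ne')] at hpow
    refine tendsto_zero_iff_norm_tendsto_zero.2 (hpow.congr fun n => ?_)
    exact Real.rpow_rpow_inv (norm_nonneg _) hp₀.ne'

theorem WeaklyLpSummable.tendsto_zero {p : ℝ≥0∞} {x : ℕ → X} (hx : WeaklyLpSummable p x)
    (g : X →L[ℝ] ℝ) : Tendsto (fun n => g (x n)) atTop (𝓝 0) := by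
  have hg := hx g
  split_ifs at hg with hp
  · exact hg
  · exact Nat.cofinite_eq_atTop ▸ hg.tendsto_cofinite_zero hp

theorem WeaklyLpSummable.smul {p : ℝ≥0∞} {x : ℕ → X} (hx : WeaklyLpSummable p x)
    {t : ℕ → ℝ} {C : ℝ} (ht : ∀ n, ‖t n‖ ≤ C) : WeaklyLpSummable p fun n => t n • x n := by
  intro g
  have hle : ∀ n, ‖g (t n • x n)‖ ≤ C * ‖g (x n)‖ := fun n => by
    rw [map_smul, norm_smul]
    exact mul_le_mul_of_nonneg_right (ht n) (norm_nonneg _)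
  have hg := hx g
  split_ifs at hg ⊢
  · exact squeeze_zero_norm hle (by simpa using (tendsto_norm_zero.comp hg).const_mul C)
  · exact (hg.norm.const_mul C).mono hle

theorem IsCompactOperator.tendsto_zero_of_weakly_tendsto_zero {ι : Type*} {l : Filter ι}
    {T : X →L[ℝ] Y} (hT : IsCompactOperator T) {h : ι → X} (hb : Bornology.IsBounded (range h))
    (hw : ∀ g : X →L[ℝ] ℝ, Tendsto (fun n => g (h n)) l (𝓝 0)) :
    Tendsto (fun n => T (h n)) l (𝓝 0) := by
  obtain ⟨K, hK, hTK⟩ := hT.image_subset_compact_of_bounded hb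
  refine hK.tendsto_nhds_of_unique_mapClusterPt
    (Eventually.of_forall fun n => hTK ⟨h n, mem_range_self n, rfl⟩) fun y _ hy => ?_
  refine SeparatingDual.eq_zero_of_forall_dual_eq_zero (R := ℝ) fun g => ?_
  have hcl : ClusterPt (g y) (𝓝 0) :=
    (hy.tendsto_comp (g.continuous.tendsto y)).clusterPt.mono (hw (g.comp T))
  by_contra hne
  exact clusterPt_iff_not_disjoint.1 hcl (disjoint_nhds_nhds.2 hne)

theorem tendsto_apply_zero_of_totallyBounded {ι : Type*} {l : Filter ι}
    {K : Set (X →L[ℝ] Y)} (hK : TotallyBounded K) {h : ι → X}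
    (hb : Bornology.IsBounded (range h)) (hK0 : ∀ T ∈ K, Tendsto (fun n => T (h n)) l (𝓝 0))
    {S : ι → X →L[ℝ] Y} (hS : ∀ n, S n ∈ K) : Tendsto (fun n => S n (h n)) l (𝓝 0) := by
  obtain ⟨M, hM, hhM⟩ := hb.exists_pos_norm_le
  refine Metric.tendsto_nhds.2 fun ε hε => ?_
  obtain ⟨F, hFK, hF, hKF⟩ := Metric.finite_approx_of_totallyBounded hK (ε / (2 * M))
    (by positivity)
  have hev : ∀ᶠ n in l, ∀ T ∈ F, ‖T (h n)‖ < ε / 2 :=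
    (eventually_all_finite hF).2 fun T hT =>
      (tendsto_norm_zero.comp (hK0 T (hFK hT))).eventually (gt_mem_nhds (half_pos hε))
  filter_upwards [hev] with n hn
  obtain ⟨T, hT, hST⟩ := mem_iUnion₂.1 (hKF (hS n))
  rw [mem_ball, dist_eq_norm] at hST
  rw [dist_zero_right]
  calc ‖S n (h n)‖ = ‖(S n - T) (h n) + T (h n)‖ := by simp
    _ ≤ ‖S n - T‖ * M + ‖T (h n)‖ :=
      (norm_add_le _ _).trans (add_le_add_left
        ((S n - T).le_opNorm_of_le (hhM _ (mem_range_self n))) _)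
    _ < ε / (2 * M) * M + ε / 2 :=
      add_lt_add_of_le_of_lt (mul_le_mul_of_nonneg_right hST.le hM.le) (hn T hT)
    _ = ε := by field_simp; ring

theorem exists_norm_sub_le_norm_fderiv_apply {f : X → Y} {f' : X → X →L[ℝ] Y} {a b : X}
    (hf : ∀ z ∈ segment ℝ a b, HasFDerivAt f (f' z) z) :
    ∃ t ∈ Icc (0 : ℝ) 1, ‖f b - f a‖ ≤ ‖f' (a + t • (b - a)) (b - a)‖ := by
  obtain ⟨g, hg1, hg⟩ := exists_dual_vector'' ℝ (f b - f a)
  have hd : ∀ t ∈ Icc (0 : ℝ) 1, HasDerivAt (fun s : ℝ => g (f (a + s • (b - a))))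
      (g (f' (a + t • (b - a)) (b - a))) t := fun t ht => by
    have hγ : HasDerivAt (fun s : ℝ => a + s • (b - a)) (b - a) t := by
      simpa using ((hasDerivAt_id t).smul_const (b - a)).const_add a
    refine g.hasFDerivAt.comp_hasDerivAt t ((hf _ ?_).comp_hasDerivAt t hγ)
    rw [segment_eq_image']
    exact mem_image_of_mem _ ht
  obtain ⟨t, ht, hslope⟩ := exists_hasDerivAt_eq_slope _ _ zero_lt_one
    (fun t ht => (hd t ht).continuousAt.continuousWithinAt)
    (fun t ht => hd t (Ioo_subset_Icc_self ht))
  refine ⟨t, Ioo_subset_Icc_self ht, ?_⟩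
  calc ‖f b - f a‖ = g (f b - f a) := hg.symm
    _ = g (f' (a + t • (b - a)) (b - a)) := by
      rw [hslope, one_smul, zero_smul, add_zero, add_sub_cancel, sub_zero, div_one, map_sub]
    _ ≤ ‖f' (a + t • (b - a)) (b - a)‖ :=
      (le_abs_self _).trans ((g.le_of_opNorm_le hg1 _).trans_eq (one_mul _))

end

theorem deriv_compact_imp_f_pConvergent_general
    {X Y : Type*} [NormedAddCommGroup X] [NormedSpace ℝ X]
    [NormedAddCommGroup Y] [NormedSpace ℝ Y]
    (p : ℝ≥0∞)
    (U : Set X) (hU : IsOpen U) (hUc : Convex ℝ U)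
    (f : X → Y) (f' : X → X →L[ℝ] Y) (hf : C1u U f f')
    (H : ∀ (c : ℕ → X) (c₀ : X), c₀ ∈ U → UBounded U (Set.range c ∪ {c₀}) →
      WeaklyLpConvergentTo p c c₀ →
      (∀ z ∈ Set.range c ∪ {c₀}, IsCompactOperator (f' z)) ∧
      IsCompact (closure (f' '' (Set.range c ∪ {c₀})))) :
    ∀ (x : ℕ → X) (x₀ : X), x₀ ∈ U → UBoundedSeq U x →
      WeaklyLpConvergentTo p x x₀ →
      Filter.Tendsto (fun n => f (x n)) Filter.atTop (nhds (f x₀)) := by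
  intro x x₀ hx₀ hx hxw
  set S := convexHull ℝ (range x ∪ {x₀})
  have hS : UBounded U S := (hx.union_singleton hU hx₀).convexHull hUc
  have hseg : ∀ n, segment ℝ x₀ (x n) ⊆ S := fun n =>
    segment_subset_convexHull (mem_union_right _ rfl) (mem_union_left _ (mem_range_self n))
  choose t ht hmvt using fun n =>
    exists_norm_sub_le_norm_fderiv_apply (fun z hz => hf.1 z (hS.1 (hseg n hz)))
  set c : ℕ → X := fun n => x₀ + t n • (x n - x₀)
  have hcS : range c ∪ {x₀} ⊆ S := by
    rintro _ (⟨n, rfl⟩ | rfl)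
    · exact (convex_convexHull ℝ (range x ∪ {x₀})).add_smul_sub_mem
        (subset_convexHull ℝ _ (mem_union_right _ rfl))
        (subset_convexHull ℝ _ (mem_union_left _ (mem_range_self n))) (ht n)
    · exact subset_convexHull ℝ _ (mem_union_right _ rfl)
  have hcw : WeaklyLpConvergentTo p c x₀ := by
    simpa [WeaklyLpConvergentTo, c] using
      hxw.smul fun n => (Real.norm_of_nonneg (ht n).1).trans_le (ht n).2
  obtain ⟨hcomp, hclosure⟩ := H c x₀ hx₀ (hS.mono hcS) hcw
  have hb : Bornology.IsBounded (range fun n => x n - x₀) :=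
    (hx.2.1.sub (Bornology.isBounded_singleton (x := x₀))).subset
      (range_subset_iff.2 fun n => sub_mem_sub (mem_range_self n) rfl)
  have hkey : Tendsto (fun n => f' (c n) (x n - x₀)) atTop (𝓝 0) := by
    refine tendsto_apply_zero_of_totallyBounded (hclosure.totallyBounded.subset subset_closure) hb
      ?_ fun n => mem_image_of_mem f' (Or.inl (mem_range_self n))
    rintro _ ⟨z, hz, rfl⟩
    exact (hcomp z hz).tendsto_zero_of_weakly_tendsto_zero hb hxw.tendsto_zero
  rw [tendsto_iff_norm_sub_tendsto_zero]
  exact squeeze_zero (fun n => norm_nonneg _) hmvt (tendsto_norm_zero.comp hkey)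

/-- If `f' ` maps `U`-bounded weakly `p`-compact subsets of `U` (sequences weakly
`p`-convergent in `U` together with their limits) into relatively compact subsets of
`K(X,Y)`, then `f` is `p`-convergent. -/
theorem deriv_compact_imp_f_pConvergent
    {X Y : Type*} [NormedAddCommGroup X] [NormedSpace ℝ X] [CompleteSpace X]
    [NormedAddCommGroup Y] [NormedSpace ℝ Y] [CompleteSpace Y]
    (p : ℝ≥0∞) (hp : 1 ≤ p) (hp' : p ≠ ⊤)
    (U : Set X) (hU : IsOpen U) (hUc : Convex ℝ U)
    (f : X → Y) (f' : X → X →L[ℝ] Y) (hf : C1u U f f')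
    (H : ∀ (c : ℕ → X) (c₀ : X), c₀ ∈ U → UBounded U (Set.range c ∪ {c₀}) →
      WeaklyLpConvergentTo p c c₀ →
      (∀ z ∈ Set.range c ∪ {c₀}, IsCompactOperator (f' z)) ∧
      IsCompact (closure (f' '' (Set.range c ∪ {c₀})))) :
    ∀ (x : ℕ → X) (x₀ : X), x₀ ∈ U → UBoundedSeq U x →
      WeaklyLpConvergentTo p x x₀ →
      Filter.Tendsto (fun n => f (x n)) Filter.atTop (nhds (f x₀)) :=
  deriv_compact_imp_f_pConvergent_general p U hU hUc f f' hf H
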